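/- arXiv:2202.04125 — 2 statements merged into one kernel-verified Lean document; each statement's English description precedes it below -/
import Mathlib

section
/- Let ρ, μ, ω, R, L, h be positive reals, let α = R√(ρω/μ), let λ = exp(3πĵ/4)·α/R, and assume J₀(λR) ≠ 0. Let u(r) = −(ĵ h R²/(L μ α²)) · [1 − J₀(λ r)/J₀(λR)] be the Womersley velocity profile. Then the volumetric flow rate through the pipe cross-section equals ∫₀^R 2πr · u(r) dr = (−ĵ π h R⁴/(L μ α²)) · [1 + 2 exp(πĵ/4) J₁(exp(3πĵ/4) α) / (α J₀(exp(3πĵ/4) α))]. -/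
/-!
Integrating the power series of `J0` term by term (dominated convergence, the tail being bounded
by that of `∑ x ^ (2k) / (k!)²`) gives `∫₀^R r J₀(λr) dr = (R/λ) J₁(λR)`: the term `r ^ (2k+1)`
integrates exactly to the `k`-th term of `J1`. The flow rate is linear in this integral, and the
stated form follows from `λR = e^{3πi/4} α` and `e^{πi/4} = -e^{-3πi/4}`.
-/

open Complex Real

/-- Bessel function of the first kind of order zero, defined by its power series. -/
noncomputable def J0 (z : ℂ) : ℂ :=
  ∑' k : ℕ, (-1 : ℂ) ^ k * (z / 2) ^ (2 * k) / ((k.factorial : ℂ)) ^ 2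

/-- Bessel function of the first kind of order one, defined by its power series. -/
noncomputable def J1 (z : ℂ) : ℂ :=
  ∑' k : ℕ, (-1 : ℂ) ^ k * (z / 2) ^ (2 * k + 1) / ((k.factorial : ℂ) * ((k + 1).factorial : ℂ))

open MeasureTheory

lemma summable_pow_two_mul_div_factorial_sq (x : ℝ) :
    Summable fun k : ℕ => x ^ (2 * k) / (k.factorial : ℝ) ^ 2 := by
  have hle (k : ℕ) : (x ^ 2) ^ k / (k.factorial : ℝ) ^ 2 ≤ (x ^ 2) ^ k / k.factorial := by
    have hfac : (1 : ℝ) ≤ k.factorial := by exact_mod_cast k.factorial_pos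
    exact div_le_div_of_nonneg_left (by positivity) (by positivity) (by nlinarith)
  simpa only [pow_mul] using Summable.of_nonneg_of_le (fun k => by positivity) hle
    (Real.summable_pow_div_factorial (x ^ 2))

lemma norm_J0_term (z : ℂ) (k : ℕ) :
    ‖(-1 : ℂ) ^ k * (z / 2) ^ (2 * k) / (k.factorial : ℂ) ^ 2‖
      = (‖z‖ / 2) ^ (2 * k) / (k.factorial : ℝ) ^ 2 := by
  simp [norm_pow]

lemma norm_J0_term_le {z : ℂ} {ρ : ℝ} (hz : ‖z‖ ≤ ρ) (k : ℕ) :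
    ‖(-1 : ℂ) ^ k * (z / 2) ^ (2 * k) / (k.factorial : ℂ) ^ 2‖
      ≤ (ρ / 2) ^ (2 * k) / (k.factorial : ℝ) ^ 2 := by
  rw [norm_J0_term]
  gcongr

lemma hasSum_J0 (z : ℂ) :
    HasSum (fun k : ℕ => (-1 : ℂ) ^ k * (z / 2) ^ (2 * k) / (k.factorial : ℂ) ^ 2) (J0 z) :=
  (Summable.of_norm_bounded (summable_pow_two_mul_div_factorial_sq (‖z‖ / 2))
    (norm_J0_term_le le_rfl)).hasSum

@[fun_prop]
lemma continuous_J0 : Continuous J0 := by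
  refine continuous_iff_continuousAt.mpr fun z => ?_
  have hJ0 : ContinuousOn J0 (Metric.ball 0 (‖z‖ + 1)) :=
    continuousOn_tsum (fun k => by fun_prop)
      (summable_pow_two_mul_div_factorial_sq ((‖z‖ + 1) / 2))
      fun k w hw => norm_J0_term_le (mem_ball_zero_iff.mp hw).le k
  exact hJ0.continuousAt (Metric.isOpen_ball.mem_nhds (by simp))

lemma integral_mul_J0_term {l : ℂ} (hl : l ≠ 0) (R : ℝ) (k : ℕ) :
    ∫ r in (0 : ℝ)..R, (r : ℂ) * ((-1 : ℂ) ^ k * (l * r / 2) ^ (2 * k) / (k.factorial : ℂ) ^ 2)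
      = R / l * ((-1 : ℂ) ^ k * (l * R / 2) ^ (2 * k + 1)
          / ((k.factorial : ℂ) * ((k + 1).factorial : ℂ))) := by
  have hintegrand (r : ℝ) :
      (r : ℂ) * ((-1 : ℂ) ^ k * (l * r / 2) ^ (2 * k) / (k.factorial : ℂ) ^ 2)
        = (-1 : ℂ) ^ k * (l / 2) ^ (2 * k) / (k.factorial : ℂ) ^ 2
          * ((r ^ (2 * k + 1) : ℝ) : ℂ) := by
    push_cast
    ring
  simp_rw [hintegrand]
  rw [intervalIntegral.integral_const_mul, intervalIntegral.integral_ofReal, integral_pow,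
    Nat.factorial_succ]
  have hfac : (k.factorial : ℂ) ≠ 0 := Nat.cast_ne_zero.mpr k.factorial_ne_zero
  have hk : (k : ℂ) + 1 ≠ 0 := Nat.cast_add_one_ne_zero k
  push_cast
  rw [zero_pow (by omega), sub_zero, show (2 * k + 1 + 1 : ℂ) = 2 * (k + 1) by ring]
  field_simp
  ring

theorem integral_mul_J0 {l : ℂ} (hl : l ≠ 0) (R : ℝ) :
    ∫ r in (0 : ℝ)..R, (r : ℂ) * J0 (l * r) = R / l * J1 (l * R) := by
  set bound : ℕ → ℝ := fun k => |R| * ((‖l‖ * |R| / 2) ^ (2 * k) / (k.factorial : ℝ) ^ 2)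
  have hbound : Summable bound :=
    (summable_pow_two_mul_div_factorial_sq (‖l‖ * |R| / 2)).mul_left |R|
  have hnorm (k : ℕ) (r : ℝ) (hr : r ∈ Set.uIoc 0 R) :
      ‖(r : ℂ) * ((-1 : ℂ) ^ k * (l * r / 2) ^ (2 * k) / (k.factorial : ℂ) ^ 2)‖ ≤ bound k := by
    have hrR : |r| ≤ |R| := by simpa using Set.abs_sub_left_of_mem_uIcc (Set.uIoc_subset_uIcc hr)
    have hlr : ‖l * r‖ ≤ ‖l‖ * |R| := by
      rw [norm_mul, Complex.norm_real, Real.norm_eq_abs]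
      gcongr
    rw [norm_mul, Complex.norm_real, Real.norm_eq_abs]
    exact mul_le_mul hrR (norm_J0_term_le hlr k) (norm_nonneg _) (abs_nonneg _)
  have hsum := intervalIntegral.hasSum_integral_of_dominated_convergence (μ := volume)
    (fun k _ => bound k) (fun k => (by fun_prop : Continuous _).aestronglyMeasurable)
    (fun k => ae_of_all _ (hnorm k)) (ae_of_all _ fun _ _ => hbound) intervalIntegrable_const
    (ae_of_all _ fun r _ => (hasSum_J0 (l * r)).mul_left (r : ℂ))
  simp only [integral_mul_J0_term hl] at hsum
  rw [← hsum.tsum_eq, tsum_mul_left, J1]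

theorem integral_womersley_profile (c : ℂ) {l : ℂ} (hl : l ≠ 0) (R : ℝ) :
    ∫ r in (0 : ℝ)..R, 2 * (π : ℂ) * r * (c * (1 - J0 (l * r) / J0 (l * R)))
      = c * π * R ^ 2 - 2 * π * c * R * J1 (l * R) / (l * J0 (l * R)) := by
  have hintegrand (r : ℝ) : 2 * (π : ℂ) * r * (c * (1 - J0 (l * r) / J0 (l * R)))
      = 2 * π * c * r - 2 * π * c / J0 (l * R) * (r * J0 (l * r)) := by
    ring
  have hid : ∫ r in (0 : ℝ)..R, (r : ℂ) = R ^ 2 / 2 := by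
    rw [intervalIntegral.integral_ofReal, integral_id]
    push_cast
    ring
  have hlin : IntervalIntegrable (fun r : ℝ => 2 * π * c * (r : ℂ)) volume 0 R :=
    (by fun_prop : Continuous _).intervalIntegrable _ _
  have hbessel : IntervalIntegrable (fun r : ℝ => (r : ℂ) * J0 (l * r)) volume 0 R :=
    (by fun_prop : Continuous _).intervalIntegrable _ _
  simp_rw [hintegrand]
  rw [intervalIntegral.integral_sub hlin (hbessel.const_mul _),
    intervalIntegral.integral_const_mul, intervalIntegral.integral_const_mul, hid,
    integral_mul_J0 hl]
  ring

theorem womersley_flow_rate_general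
    (ρ μ ω R L h : ℝ) (hρ : 0 < ρ) (hμ : 0 < μ) (hω : 0 < ω)
    (hR : 0 < R)
    (α : ℝ) (hα : α = R * Real.sqrt (ρ * ω / μ))
    (l : ℂ) (hl : l = Complex.exp (3 * (π : ℂ) * I / 4) * (α : ℂ) / (R : ℂ))
    (u : ℝ → ℂ)
    (hu : u = fun r : ℝ =>
      -(I * (h : ℂ) * (R : ℂ) ^ 2 / ((L : ℂ) * (μ : ℂ) * (α : ℂ) ^ 2)) *
        (1 - J0 (l * (r : ℂ)) / J0 (l * (R : ℂ)))) :
    ∫ r in (0 : ℝ)..R, (2 * (π : ℂ) * (r : ℂ)) * u r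
      = (-I * (π : ℂ) * (h : ℂ) * (R : ℂ) ^ 4 / ((L : ℂ) * (μ : ℂ) * (α : ℂ) ^ 2)) *
        (1 + 2 * Complex.exp ((π : ℂ) * I / 4) * J1 (Complex.exp (3 * (π : ℂ) * I / 4) * (α : ℂ))
          / ((α : ℂ) * J0 (Complex.exp (3 * (π : ℂ) * I / 4) * (α : ℂ)))) := by
  set E := Complex.exp (3 * (π : ℂ) * I / 4)
  have hα0 : (α : ℂ) ≠ 0 := ofReal_ne_zero.mpr (by rw [hα]; positivity)
  have hR0 : (R : ℂ) ≠ 0 := ofReal_ne_zero.mpr hR.ne'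
  have hl0 : l ≠ 0 := by rw [hl]; exact div_ne_zero (mul_ne_zero (exp_ne_zero _) hα0) hR0
  have hlR : l * R = E * α := by rw [hl]; field_simp
  have hexp : Complex.exp (π * I / 4) = -E⁻¹ := by
    have hprod : -Complex.exp (π * I / 4) * E = 1 := by
      rw [neg_mul, ← Complex.exp_add, show π * I / 4 + 3 * π * I / 4 = π * I by ring,
        exp_pi_mul_I, neg_neg]
    exact neg_eq_iff_eq_neg.mp (eq_inv_of_mul_eq_one_left hprod)
  subst hu
  rw [integral_womersley_profile _ hl0, hlR, hexp, hl]
  simp only [div_eq_mul_inv, mul_inv, inv_inv]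
  ring

theorem womersley_flow_rate
    (ρ μ ω R L h : ℝ) (hρ : 0 < ρ) (hμ : 0 < μ) (hω : 0 < ω)
    (hR : 0 < R) (hL : 0 < L) (hh : 0 < h)
    (α : ℝ) (hα : α = R * Real.sqrt (ρ * ω / μ))
    (l : ℂ) (hl : l = Complex.exp (3 * (π : ℂ) * I / 4) * (α : ℂ) / (R : ℂ))
    (hJ0 : J0 (l * (R : ℂ)) ≠ 0)
    (u : ℝ → ℂ)
    (hu : u = fun r : ℝ =>
      -(I * (h : ℂ) * (R : ℂ) ^ 2 / ((L : ℂ) * (μ : ℂ) * (α : ℂ) ^ 2)) *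
        (1 - J0 (l * (r : ℂ)) / J0 (l * (R : ℂ)))) :
    ∫ r in (0 : ℝ)..R, (2 * (π : ℂ) * (r : ℂ)) * u r
      = (-I * (π : ℂ) * (h : ℂ) * (R : ℂ) ^ 4 / ((L : ℂ) * (μ : ℂ) * (α : ℂ) ^ 2)) *
        (1 + 2 * Complex.exp ((π : ℂ) * I / 4) * J1 (Complex.exp (3 * (π : ℂ) * I / 4) * (α : ℂ))
          / ((α : ℂ) * J0 (Complex.exp (3 * (π : ℂ) * I / 4) * (α : ℂ)))) :=
  womersley_flow_rate_general ρ μ ω R L h hρ hμ hω hR α hα l hl u hu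
end

section
/- Let ρ, μ, R, L, h be positive reals and for α > 0 set λ(α) = exp(3πĵ/4)·α/R and u_α(r) = −(ĵ h R²/(L μ α²)) · [1 − J₀(λ(α) r)/J₀(λ(α) R)] (the Womersley velocity profile at Womersley number α). Then for every fixed r ∈ [0, R], the velocity converges to the steady Poiseuille profile in the quasi-steady limit: u_α(r) → h(R² − r²)/(4μL) as α → 0⁺. -/
/-!
Write `J₀ z = F ((z / 2) ^ 2)` with `F w = ∑ (-1)^k w^k / (k!)^2`, analytic at `0` with `F 0 = 1`
and `F' 0 = -1`. Since `exp (3πi/4) ^ 2 = -i`, both Bessel values in the profile are of the form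
`F (c α²)`, so the profile is a constant times the difference quotient
`(1 - F (a t) / F (b t)) / t` at `t = α²`, which tends to `(b - a) F' 0` as `t → 0`.
-/

open Complex Real Filter

open Topology FormalMultilinearSeries

theorem FormalMultilinearSeries.one_le_radius_ofScalars {𝕜 E : Type*} [NontriviallyNormedField 𝕜]
    [NormedRing E] [NormedAlgebra 𝕜 E] [NormOneClass E] {c : ℕ → 𝕜} (hc : ∀ n, ‖c n‖ ≤ 1) :
    1 ≤ (ofScalars E c).radius := by
  refine mod_cast le_radius_of_bound _ 1 fun n => ?_
  simpa [ofScalars_norm] using hc n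

theorem hasDerivAt_ofScalarsSum_zero {𝕜 : Type*} [NontriviallyNormedField 𝕜] [CompleteSpace 𝕜]
    {c : ℕ → 𝕜} (hc : 0 < (ofScalars 𝕜 c).radius) :
    HasDerivAt (ofScalarsSum (E := 𝕜) c) (c 1) 0 := by
  have h := ((ofScalars 𝕜 c).hasFPowerSeriesOnBall hc).hasFPowerSeriesAt.hasDerivAt
  rwa [ofScalars_apply_eq, one_pow, smul_eq_mul, mul_one] at h

theorem HasDerivAt.tendsto_one_sub_div_comp_mul_div {𝕜 : Type*} [NontriviallyNormedField 𝕜]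
    {f : 𝕜 → 𝕜} {f' : 𝕜} (hf : HasDerivAt f f' 0) (hf0 : f 0 = 1) (a b : 𝕜) :
    Tendsto (fun t => (1 - f (a * t) / f (b * t)) / t) (𝓝[≠] 0) (𝓝 ((b - a) * f')) := by
  have hcomp (c : 𝕜) : HasDerivAt (fun t => f (c * t)) (f' * c) 0 := by
    refine HasDerivAt.comp (0 : 𝕜) (by simpa using hf) ?_
    simpa using (hasDerivAt_id (0 : 𝕜)).const_mul c
  have hdiff : Tendsto (slope (fun t => f (b * t) - f (a * t)) 0) (𝓝[≠] 0)
      (𝓝 (f' * b - f' * a)) := hasDerivAt_iff_tendsto_slope.mp ((hcomp b).sub (hcomp a))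
  have hden : Tendsto (fun t => f (b * t)) (𝓝[≠] 0) (𝓝 1) := by
    simpa [hf0] using (hcomp b).continuousAt.tendsto.mono_left nhdsWithin_le_nhds
  have hquot := hdiff.div hden one_ne_zero
  rw [show (f' * b - f' * a) / 1 = (b - a) * f' by ring] at hquot
  refine hquot.congr' ?_
  filter_upwards [hden.eventually_ne one_ne_zero] with t ht
  simp only [Pi.div_apply, slope_def_field, mul_zero, hf0, sub_self, sub_zero]
  field_simp

noncomputable def besselJ0Coeff (k : ℕ) : ℂ := (-1) ^ k / (k.factorial : ℂ) ^ 2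

theorem J0_eq_ofScalarsSum (z : ℂ) :
    J0 z = ofScalarsSum (E := ℂ) besselJ0Coeff ((z / 2) ^ 2) := by
  rw [ofScalars_sum_eq, J0]
  refine tsum_congr fun k => ?_
  rw [besselJ0Coeff, smul_eq_mul, ← pow_mul]
  ring

theorem hasDerivAt_ofScalarsSum_besselJ0Coeff :
    HasDerivAt (ofScalarsSum (E := ℂ) besselJ0Coeff) (-1) 0 := by
  have hc : ∀ k, ‖besselJ0Coeff k‖ ≤ 1 := fun k => by
    rw [besselJ0Coeff, norm_div, norm_pow, norm_pow, norm_neg, norm_one, one_pow,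
      Complex.norm_natCast]
    exact div_le_one_of_le₀ (one_le_pow₀ (mod_cast k.factorial_pos)) (by positivity)
  have hrad := one_le_radius_ofScalars (E := ℂ) hc
  simpa [besselJ0Coeff] using hasDerivAt_ofScalarsSum_zero (zero_lt_one.trans_le hrad)

theorem ofScalarsSum_besselJ0Coeff_zero : ofScalarsSum (E := ℂ) besselJ0Coeff 0 = 1 := by
  simp [ofScalarsSum_zero, besselJ0Coeff]

theorem exp_three_pi_div_four_mul_I_sq : Complex.exp (3 * π * I / 4) ^ 2 = -I := by
  rw [← Complex.exp_nat_mul,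
    show ((2 : ℕ) : ℂ) * (3 * π * I / 4) = π * I + π / 2 * I by push_cast; ring,
    Complex.exp_add, exp_pi_mul_I, exp_pi_div_two_mul_I]
  ring

theorem J0_exp_three_pi_div_four_mul (α R s : ℂ) :
    J0 (Complex.exp (3 * π * I / 4) * α / R * s) =
      ofScalarsSum (E := ℂ) besselJ0Coeff (-I * s ^ 2 / (4 * R ^ 2) * α ^ 2) := by
  rw [J0_eq_ofScalarsSum, ← exp_three_pi_div_four_mul_I_sq]
  ring_nf

theorem tendsto_ofReal_sq_nhdsGT_zero :
    Tendsto (fun α : ℝ => (α : ℂ) ^ 2) (𝓝[>] 0) (𝓝[≠] 0) := by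
  refine tendsto_nhdsWithin_iff.mpr ⟨?_, ?_⟩
  · exact ((continuous_ofReal.pow 2).tendsto' 0 0 (by simp)).mono_left nhdsWithin_le_nhds
  · filter_upwards [self_mem_nhdsWithin] with α (hα : 0 < α)
    exact pow_ne_zero 2 (mod_cast hα.ne')

theorem womersley_profile_tendsto_poiseuille_general
    (μ R L h : ℝ) (hR : 0 < R)
    (r : ℝ) :
    Tendsto
      (fun α : ℝ =>
        -(I * (h : ℂ) * (R : ℂ) ^ 2 / ((L : ℂ) * (μ : ℂ) * (α : ℂ) ^ 2)) *
          (1 - J0 (Complex.exp (3 * (π : ℂ) * I / 4) * (α : ℂ) / (R : ℂ) * (r : ℂ))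
              / J0 (Complex.exp (3 * (π : ℂ) * I / 4) * (α : ℂ) / (R : ℂ) * (R : ℂ))))
      (nhdsWithin 0 (Set.Ioi 0))
      (nhds ((h * (R ^ 2 - r ^ 2) / (4 * μ * L) : ℝ) : ℂ)) := by
  set C : ℂ := -(I * h * R ^ 2 / (L * μ))
  set a : ℂ := -I * r ^ 2 / (4 * R ^ 2)
  set b : ℂ := -I * R ^ 2 / (4 * R ^ 2)
  have hlim := (tendsto_const_nhds (x := C)).mul
    ((hasDerivAt_ofScalarsSum_besselJ0Coeff.tendsto_one_sub_div_comp_mul_div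
      ofScalarsSum_besselJ0Coeff_zero a b).comp tendsto_ofReal_sq_nhdsGT_zero)
  have hval : C * ((b - a) * -1) = ((h * (R ^ 2 - r ^ 2) / (4 * μ * L) : ℝ) : ℂ) := by
    have : (R : ℂ) ≠ 0 := mod_cast hR.ne'
    simp only [C, a, b]
    push_cast
    field_simp
    ring_nf
    rw [I_sq]
    ring
  rw [← hval]
  refine hlim.congr fun α => ?_
  simp only [Function.comp_apply, J0_exp_three_pi_div_four_mul]
  ring

theorem womersley_profile_tendsto_poiseuille
    (ρ μ R L h : ℝ) (hρ : 0 < ρ) (hμ : 0 < μ) (hR : 0 < R) (hL : 0 < L) (hh : 0 < h)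
    (r : ℝ) (hr : r ∈ Set.Icc (0 : ℝ) R) :
    Tendsto
      (fun α : ℝ =>
        -(I * (h : ℂ) * (R : ℂ) ^ 2 / ((L : ℂ) * (μ : ℂ) * (α : ℂ) ^ 2)) *
          (1 - J0 (Complex.exp (3 * (π : ℂ) * I / 4) * (α : ℂ) / (R : ℂ) * (r : ℂ))
              / J0 (Complex.exp (3 * (π : ℂ) * I / 4) * (α : ℂ) / (R : ℂ) * (R : ℂ))))
      (nhdsWithin 0 (Set.Ioi 0))
      (nhds ((h * (R ^ 2 - r ^ 2) / (4 * μ * L) : ℝ) : ℂ)) :=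
  womersley_profile_tendsto_poiseuille_general μ R L h hR r
end
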